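/- Let μ_n be the largest eigenvalue of the operator x + x^{-1} + y + y^{-1} in any of the n-dimensional representations T_q (1 ≤ q ≤ n-1) of the finite Heisenberg group H_n. Then for all sufficiently large n, μ_n ≤ 4 - 3/(5n). -/

import Mathlib

/-!
A positive vector `φ` with `A φ ≤ C φ` entrywise bounds every real eigenvalue of a matrix `A`
with nonnegative off-diagonal entries by `C`: apply Gershgorin's theorem to `D⁻¹ A D`,
`D = diagonal φ`. For `heisMatrix n q` take `φ k = exp (s cos θ_k)` with `θ_k = 2πqk/n`,
`α = 2πq/n` and `s (1 - cos α) = λ = 3/(5n)`. Since `θ_{k±1} = θ_k ± α`, a second-order bound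
on `exp` gives `φ (k+1) + φ (k-1) ≤ (4 - λ - 2 cos θ_k) φ k` as soon as `(s sin α)² ≤ 9/100`,
and this follows from `1 - cos α ≥ 8/n²`.
-/

/-- The n × n matrix of the operator x + x⁻¹ + y + y⁻¹ in the representation T_q of
the finite Heisenberg group: diagonal entries 2cos(2πqk/n), ones on the first super-
and sub-diagonals and in the corners (periodic tridiagonal). -/
noncomputable def heisMatrix (n q : ℕ) : Matrix (Fin n) (Fin n) ℝ :=
  Matrix.of fun i j : Fin n =>
    if i = j then 2 * Real.cos (2 * Real.pi * q * (i : ℕ) / n)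
    else if ((i : ℕ) + 1) % n = (j : ℕ) ∨ ((j : ℕ) + 1) % n = (i : ℕ) then 1
    else 0

open Real Matrix Finset

theorem Matrix.le_of_mem_spectrum_of_mulVec_le {ι : Type*} [Fintype ι] [DecidableEq ι]
    {A : Matrix ι ι ℝ} (hA : ∀ i j, i ≠ j → 0 ≤ A i j) {φ : ι → ℝ} (hφ : ∀ i, 0 < φ i)
    {C : ℝ} (hAφ : ∀ i, (A *ᵥ φ) i ≤ C * φ i) {μ : ℝ} (hμ : μ ∈ spectrum ℝ A) : μ ≤ C := by
  let D : (Matrix ι ι ℝ)ˣ :=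
    { val := diagonal φ, inv := diagonal φ⁻¹
      val_inv := by simp [diagonal_mul_diagonal, fun i => (hφ i).ne']
      inv_val := by simp [diagonal_mul_diagonal, fun i => (hφ i).ne'] }
  have hentry : ∀ i j, ((D⁻¹ : (Matrix ι ι ℝ)ˣ) * A * D : Matrix ι ι ℝ) i j
      = A i j * φ j / φ i := by
    intro i j
    simp [D]
    ring
  rw [← spectrum.units_conjugate' (u := D), ← spectrum_toLin',
    ← Module.End.hasEigenvalue_iff_mem_spectrum] at hμ
  obtain ⟨k, hk⟩ := eigenvalue_mem_ball hμ
  simp only [hentry, Metric.mem_closedBall, dist_eq_norm, Real.norm_eq_abs] at hk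
  have hdiag : A k k * φ k / φ k = A k k := mul_div_cancel_right₀ _ (hφ k).ne'
  have hradius : ∑ j ∈ univ.erase k, |A k j * φ j / φ k|
      = (∑ j ∈ univ.erase k, A k j * φ j) / φ k := by
    rw [sum_div]
    refine sum_congr rfl fun j hj => abs_of_nonneg ?_
    exact div_nonneg (mul_nonneg (hA k j (ne_of_mem_erase hj).symm) (hφ j).le) (hφ k).le
  have hrow : ∑ j ∈ univ.erase k, A k j * φ j ≤ (C - A k k) * φ k := by
    have := hAφ k
    rw [mulVec, dotProduct, ← add_sum_erase _ _ (mem_univ k)] at this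
    linarith
  rw [hdiag, hradius, le_div_iff₀ (hφ k)] at hk
  have := (mul_le_mul_of_nonneg_right (le_abs_self (μ - A k k)) (hφ k).le).trans (hk.trans hrow)
  linarith [le_of_mul_le_mul_right this (hφ k)]

theorem Real.exp_le_one_add_add_two_mul_sq {z : ℝ} (hz : z ≤ 1 / 2) :
    exp z ≤ 1 + z + 2 * z ^ 2 := by
  have hinv : exp z * (1 - z) ≤ 1 := by
    calc exp z * (1 - z) ≤ exp z * exp (-z) := by
          gcongr; linarith [add_one_le_exp (-z)]
      _ = 1 := by rw [← exp_add, add_neg_cancel, exp_zero]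
  nlinarith [mul_nonneg (sq_nonneg z) (sub_nonneg.mpr hz), exp_pos z]

theorem exp_sub_add_exp_add_le {lam t x y : ℝ} (hl0 : 0 < lam) (hl : lam ≤ 1 / 100)
    (ht : t ^ 2 ≤ 9 / 100) (hxy : x ^ 2 + y ^ 2 = 1) :
    exp (-lam * x - t * y) + exp (-lam * x + t * y) ≤ 4 - lam - 2 * x := by
  have hx : x ^ 2 ≤ 1 := by nlinarith [sq_nonneg y]
  have hlx : (lam * x) ^ 2 ≤ lam / 100 := by
    nlinarith [mul_le_mul_of_nonneg_left hx (sq_nonneg lam), mul_nonneg hl0.le (sub_nonneg.mpr hl)]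
  have hty : (t * y) ^ 2 ≤ 9 / 50 * (1 - x) := by
    nlinarith [mul_le_mul_of_nonneg_right ht (sq_nonneg y), sq_nonneg (1 - x)]
  have hty' : (t * y) ^ 2 ≤ 9 / 100 := by
    nlinarith [mul_le_mul_of_nonneg_right ht (sq_nonneg y)]
  have hsmall : ∀ z : ℝ, z ^ 2 ≤ 1 / 4 → z ≤ 1 / 2 := fun z hz => by nlinarith
  have e₁ := exp_le_one_add_add_two_mul_sq
    (hsmall _ (by nlinarith [sq_nonneg (lam * x + t * y)]) : -lam * x - t * y ≤ 1 / 2)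
  have e₂ := exp_le_one_add_add_two_mul_sq
    (hsmall _ (by nlinarith [sq_nonneg (lam * x - t * y)]) : -lam * x + t * y ≤ 1 / 2)
  -- the quadratic terms are absorbed by `lam` and by `(2 - 2 lam) (1 - x)`
  nlinarith [mul_nonneg hl0.le (sub_nonneg.mpr (show x ≤ 1 by nlinarith))]

theorem exp_mul_cos_add_add_exp_mul_cos_sub_le {lam s α : ℝ} (hl0 : 0 < lam)
    (hl : lam ≤ 1 / 100) (hs : s * (1 - cos α) = lam) (ht : (s * sin α) ^ 2 ≤ 9 / 100) (θ : ℝ) :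
    exp (s * cos (θ + α)) + exp (s * cos (θ - α)) ≤ (4 - lam - 2 * cos θ) * exp (s * cos θ) := by
  have hadd : s * cos (θ + α) = s * cos θ + (-lam * cos θ - s * sin α * sin θ) := by
    rw [cos_add, ← hs]; ring
  have hsub : s * cos (θ - α) = s * cos θ + (-lam * cos θ + s * sin α * sin θ) := by
    rw [cos_sub, ← hs]; ring
  rw [hadd, hsub, exp_add, exp_add, ← mul_add, mul_comm]
  gcongr
  exact exp_sub_add_exp_add_le hl0 hl ht (cos_sq_add_sin_sq θ)

theorem eight_div_sq_le_one_sub_cos {n q : ℕ} (hq : 0 < q) (hqn : q < n) :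
    8 / (n : ℝ) ^ 2 ≤ 1 - cos (2 * π * q / n) := by
  have hn : (0 : ℝ) < n := by exact_mod_cast hq.trans hqn
  have hq' : (1 : ℝ) ≤ q := by exact_mod_cast hq
  have hqn' : (q : ℝ) + 1 ≤ n := by exact_mod_cast hqn
  -- reduce the angle to `[-π, π]`, where `cos y ≤ 1 - 2 y² / π²`
  obtain ⟨y, hyπ, hy, hcos⟩ : ∃ y, |y| ≤ π ∧ 2 * π / n ≤ |y| ∧ cos (2 * π * q / n) = cos y := by
    rcases le_total (2 * q) n with h | h
    · have h' : 2 * (q : ℝ) ≤ n := by exact_mod_cast h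
      refine ⟨2 * π * q / n, ?_, ?_, rfl⟩ <;>
        rw [abs_of_nonneg (by positivity)]
      · rw [div_le_iff₀ hn]; nlinarith [pi_pos]
      · rw [div_le_div_iff_of_pos_right hn]; nlinarith [pi_pos]
    · have h' : (n : ℝ) ≤ 2 * q := by exact_mod_cast h
      refine ⟨2 * π * q / n - 2 * π, ?_, ?_, (cos_sub_two_pi _).symm⟩ <;>
        rw [abs_of_nonpos (by rw [sub_nonpos, div_le_iff₀ hn]; nlinarith [pi_pos]),
          show -(2 * π * q / n - 2 * π) = 2 * π * (n - q) / n by field_simp; ring]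
      · rw [div_le_iff₀ hn]; nlinarith [pi_pos]
      · rw [div_le_div_iff_of_pos_right hn]; nlinarith [pi_pos]
  have hy2 : (2 * π / n) ^ 2 ≤ y ^ 2 := by
    rw [← sq_abs y]; gcongr
  calc 8 / (n : ℝ) ^ 2 = 2 / π ^ 2 * (2 * π / n) ^ 2 := by field_simp; ring
    _ ≤ 2 / π ^ 2 * y ^ 2 := by gcongr
    _ ≤ 1 - cos (2 * π * q / n) := by linarith [cos_le_one_sub_mul_cos_sq hyπ]

theorem Fin.val_one_of_one_lt {n : ℕ} [NeZero n] (hn : 1 < n) : ((1 : Fin n) : ℕ) = 1 := by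
  rw [Fin.val_one', Nat.mod_eq_of_lt hn]

theorem Fin.intCast_val_add_modEq {n : ℕ} (a b : Fin n) :
    (((a + b : Fin n) : ℕ) : ℤ) ≡ a + b [ZMOD n] := by
  rw [Fin.val_add]; push_cast; exact Int.mod_modEq _ _

theorem Fin.intCast_val_sub_modEq {n : ℕ} [NeZero n] (a b : Fin n) :
    (((a - b : Fin n) : ℕ) : ℤ) ≡ a - b [ZMOD n] := by
  have h := Fin.intCast_val_add_modEq (a - b) b
  rw [sub_add_cancel] at h
  simpa using (h.sub_right (b : ℤ)).symm

theorem cos_two_pi_mul_div_congr (n q : ℕ) {a b : ℤ} (h : a ≡ b [ZMOD n]) :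
    cos (2 * π * q * a / n) = cos (2 * π * q * b / n) := by
  rcases eq_or_ne n 0 with rfl | hn
  · simp
  obtain ⟨z, hz⟩ := h.symm.dvd
  have hab : (a : ℝ) = b + n * z := by
    rw [← sub_eq_iff_eq_add']; exact_mod_cast hz
  rw [hab, show 2 * π * q * (b + n * z) / n = 2 * π * q * b / n + (q * z : ℤ) * (2 * π) by
    push_cast; field_simp, cos_add_int_mul_two_pi]

theorem heisMatrix_nonneg_of_ne {n : ℕ} (q : ℕ) {i j : Fin n} (hij : i ≠ j) :
    0 ≤ heisMatrix n q i j := by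
  simp only [heisMatrix, of_apply, if_neg hij]
  split_ifs <;> norm_num

section

variable {n : ℕ} [NeZero n]

theorem heisMatrix_apply (hn : 3 ≤ n) (q : ℕ) (k j : Fin n) :
    heisMatrix n q k j = (if j = k then 2 * cos (2 * π * q * (k : ℕ) / n) else 0)
      + (if j = k + 1 then 1 else 0) + (if j = k - 1 then 1 else 0) := by
  have hone : ((1 : Fin n) : ℕ) = 1 := Fin.val_one_of_one_lt (by omega)
  have hsucc_eq : ∀ i i' : Fin n, ((i : ℕ) + 1) % n = i' ↔ i' = i + 1 := fun i i' => by
    rw [eq_comm, Fin.ext_iff, Fin.val_add, hone]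
  have hpred : ∀ i : Fin n, k = i + 1 ↔ i = k - 1 := fun i => by
    rw [eq_sub_iff_add_eq, eq_comm]
  have hone_ne : (1 : Fin n) ≠ 0 := by rw [Ne, Fin.ext_iff, hone]; simp
  have htwo_ne : (1 + 1 : Fin n) ≠ 0 := by
    rw [Ne, Fin.ext_iff, Fin.val_add, hone, Nat.mod_eq_of_lt (by omega)]; simp
  have hne₁ : k ≠ k + 1 := by rwa [Ne, left_eq_add]
  have hne₂ : k ≠ k - 1 := by rwa [Ne, eq_sub_iff_add_eq, add_eq_left]
  have hne₃ : k + 1 ≠ k - 1 := by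
    rwa [Ne, eq_sub_iff_add_eq, add_assoc, add_eq_left]
  simp only [heisMatrix, of_apply, hsucc_eq, hpred]
  split_ifs <;> subst_vars <;> first | ring1 | tauto

theorem heisMatrix_mulVec (hn : 3 ≤ n) (q : ℕ) (v : Fin n → ℝ) (k : Fin n) :
    (heisMatrix n q *ᵥ v) k = 2 * cos (2 * π * q * (k : ℕ) / n) * v k + v (k + 1) + v (k - 1) := by
  simp [mulVec, dotProduct, heisMatrix_apply hn, add_mul, ite_mul, sum_add_distrib]

theorem heisMatrix_mulVec_exp_le (hn : 3 ≤ n) {q : ℕ} {lam s : ℝ} (hl0 : 0 < lam)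
    (hl : lam ≤ 1 / 100) (hs : s * (1 - cos (2 * π * q / n)) = lam)
    (ht : (s * sin (2 * π * q / n)) ^ 2 ≤ 9 / 100) (k : Fin n) :
    (heisMatrix n q *ᵥ fun j : Fin n => exp (s * cos (2 * π * q * (j : ℕ) / n))) k
      ≤ (4 - lam) * exp (s * cos (2 * π * q * (k : ℕ) / n)) := by
  have hone : ((1 : Fin n) : ℕ) = 1 := Fin.val_one_of_one_lt (by omega)
  have hsucc := cos_two_pi_mul_div_congr n q (Fin.intCast_val_add_modEq k 1)
  have hpred := cos_two_pi_mul_div_congr n q (Fin.intCast_val_sub_modEq k 1)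
  push_cast [hone] at hsucc hpred
  rw [heisMatrix_mulVec hn, hsucc, hpred, mul_add, mul_sub, add_div, sub_div, mul_one]
  have := exp_mul_cos_add_add_exp_mul_cos_sub_le hl0 hl hs ht (2 * π * q * (k : ℕ) / n)
  linarith

end

/-- for all sufficiently large primes n, every eigenvalue of the matrix
of x + x⁻¹ + y + y⁻¹ in any n-dimensional representation T_q (1 ≤ q ≤ n-1) of the
finite Heisenberg group H_n is at most 4 - 3/(5n). -/
theorem heisMatrix_all_q_eigenvalue_upper_bound :
    ∃ N : ℕ, ∀ n : ℕ, N ≤ n → n.Prime →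
      ∀ q : ℕ, 1 ≤ q → q ≤ n - 1 →
        ∀ μ ∈ spectrum ℝ (heisMatrix n q), μ ≤ 4 - 3 / (5 * (n : ℝ)) := by
  refine ⟨100, fun n hn _ q hq hqn μ hμ => ?_⟩
  have : NeZero n := ⟨by omega⟩
  have hn' : (100 : ℝ) ≤ n := by exact_mod_cast hn
  set α := 2 * π * q / n
  set lam := 3 / (5 * (n : ℝ))
  have hδ : 8 / (n : ℝ) ^ 2 ≤ 1 - cos α := eight_div_sq_le_one_sub_cos (by omega) (by omega)
  have hδ0 : 0 < 1 - cos α := lt_of_lt_of_le (by positivity) hδ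
  set s := lam / (1 - cos α)
  have hs : s * (1 - cos α) = lam := div_mul_cancel₀ _ hδ0.ne'
  have ht : (s * sin α) ^ 2 ≤ 9 / 100 :=
    calc (s * sin α) ^ 2 ≤ 2 * lam * s := by
          rw [← hs]; nlinarith [sin_sq_add_cos_sq α, sq_nonneg (s * (1 - cos α))]
      _ ≤ 2 * lam * (lam / (8 / n ^ 2)) := by
          gcongr; exact div_le_div_of_nonneg_left (by positivity) (by positivity) hδ
      _ = 9 / 100 := by simp only [lam]; field_simp; ring
  exact Matrix.le_of_mem_spectrum_of_mulVec_le (fun _ _ => heisMatrix_nonneg_of_ne q)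
    (fun _ => exp_pos _)
    (heisMatrix_mulVec_exp_le (by omega) (by positivity)
      (by rw [div_le_div_iff₀ (by positivity) (by norm_num)]; linarith) hs ht) hμ
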